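/- arXiv:0804.3599 — 3 statements merged into one kernel-verified Lean document; each statement's English description precedes it below -/
import Mathlib

section
/- Let G = (V, wt) be a one-way bipartite weighted directed graph: V is partitioned into nonempty sets L and R such that wt(u,v) = 0 unless u ∈ L and v ∈ R, and every u ∈ L has ∑_{v ∈ R} wt(u,v) > 0. Define out(u) = ∑_{v'} wt(u,v') and PR_bip(v) = ∑_{u : out(u) > 0} wt(u,v)/out(u). Then there exist constants a > 0 and b such that the function v ↦ a·PR_bip(v) + b is a positive, sum-normalized (∑_v = 1) solution of the smoothed PageRank equation PR(v) = ∑_{u : out(u)>0} [(1−λ)/|V| + λ·wt(u,v)/out(u)]·PR(u) + ∑_{u : out(u)=0} (1/|V|)·PR(u), for any damping factor λ ∈ (0,1). -/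
/-!
Call the nodes with positive out-weight sources. In a one-way bipartite graph no edge enters a
source, so `PR_bip` vanishes on the sources and its total mass is the number of sources.
Splitting off the sinks through the total mass, the smoothed PageRank operator sends `x` to
`λ ∑_{u source} wt(u,v)/out(u) · x u + (∑ x - λ ∑_{u source} x u) / |V|`. The vector
`x = λ b · PR_bip + b` is the constant `b` on the sources and has mass `b (λ · #sources + |V|)`,
so choosing `b` to make that mass `1` also makes `x` a fixed point.
-/

open Finset

namespace PageRank

variable {V : Type*} [Fintype V]

noncomputable def prBip (wt : V → V → ℝ) (out : V → ℝ) (v : V) : ℝ :=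
  ∑ u ∈ univ.filter (fun u => 0 < out u), wt u v / out u

section

variable {wt : V → V → ℝ} {out : V → ℝ}

theorem prBip_nonneg (hnn : ∀ u v, 0 ≤ wt u v) (v : V) : 0 ≤ prBip wt out v :=
  sum_nonneg fun u hu => div_nonneg (hnn u v) (mem_filter.1 hu).2.le

theorem prBip_eq_zero_of_pos (hsink : ∀ u v, wt u v ≠ 0 → out v = 0) {v : V} (hv : 0 < out v) :
    prBip wt out v = 0 :=
  sum_eq_zero fun u _ => by
    rw [not_imp_comm.1 (hsink u v) hv.ne', zero_div]

theorem sum_prBip (hout : ∀ u, out u = ∑ v, wt u v) :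
    ∑ v, prBip wt out v = #(univ.filter fun u => 0 < out u) := by
  simp only [prBip]
  rw [sum_comm, card_eq_sum_ones, Nat.cast_sum]
  refine sum_congr rfl fun u hu => ?_
  rw [← sum_div, ← hout, div_self (mem_filter.1 hu).2.ne', Nat.cast_one]

theorem out_eq_zero_of_wt_ne_zero {L R : Finset V} (hout : ∀ u, out u = ∑ v, wt u v)
    (hbip : ∀ u v, wt u v ≠ 0 → u ∈ L ∧ v ∈ R) (hdisj : ∀ v, ¬(v ∈ L ∧ v ∈ R))
    {u v : V} (huv : wt u v ≠ 0) : out v = 0 := by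
  rw [hout]
  refine sum_eq_zero fun w _ => ?_
  by_contra hvw
  exact hdisj v ⟨(hbip v w hvw).1, (hbip u v huv).2⟩

end

theorem smoothed_pagerank_rhs_eq (wt : V → V → ℝ) {out : V → ℝ} (hout : ∀ u, 0 ≤ out u)
    (lam : ℝ) (x : V → ℝ) (v : V) :
    (∑ u ∈ univ.filter (fun u => 0 < out u),
        ((1 - lam) / (Fintype.card V : ℝ) + lam * wt u v / out u) * x u) +
      ∑ u ∈ univ.filter (fun u => out u = 0), (1 / (Fintype.card V : ℝ)) * x u =
    lam * ∑ u ∈ univ.filter (fun u => 0 < out u), wt u v / out u * x u +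
      (∑ u, x u - lam * ∑ u ∈ univ.filter (fun u => 0 < out u), x u) / Fintype.card V := by
  have hsinks : univ.filter (fun u => out u = 0) = univ.filter (fun u => ¬0 < out u) :=
    filter_congr fun u _ => by simp [(hout u).ge_iff_eq']
  have hsplit : ∀ u, ((1 - lam) / (Fintype.card V : ℝ) + lam * wt u v / out u) * x u =
      (1 - lam) / Fintype.card V * x u + lam * (wt u v / out u * x u) := fun u => by ring
  rw [hsinks, ← sum_filter_add_sum_filter_not univ (fun u => 0 < out u) x]
  simp only [hsplit, sum_add_distrib, ← mul_sum]
  ring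

end PageRank

open PageRank in
theorem prBip_affine_solves_pagerank_general
    {V : Type*} [Fintype V] [Nonempty V]
    (wt : V → V → ℝ) (L R : Finset V) (lam : ℝ)
    (hlam : 0 < lam)
    (hdisj : ∀ v : V, ¬(v ∈ L ∧ v ∈ R))
    (hnn : ∀ u v : V, 0 ≤ wt u v)
    (hbip : ∀ u v : V, wt u v ≠ 0 → u ∈ L ∧ v ∈ R)
    (out : V → ℝ) (hout : ∀ u : V, out u = ∑ v : V, wt u v)
    (PRbip : V → ℝ)
    (hPRbip : ∀ v : V,
      PRbip v = ∑ u ∈ univ.filter (fun u => 0 < out u), wt u v / out u) :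
    ∃ a b : ℝ, 0 < a ∧
      (∀ v : V, 0 < a * PRbip v + b) ∧
      (∑ v : V, (a * PRbip v + b)) = 1 ∧
      (∀ v : V, a * PRbip v + b =
        (∑ u ∈ univ.filter (fun u => 0 < out u),
          ((1 - lam) / (Fintype.card V : ℝ) + lam * wt u v / out u)
            * (a * PRbip u + b)) +
        ∑ u ∈ univ.filter (fun u => out u = 0),
          (1 / (Fintype.card V : ℝ)) * (a * PRbip u + b)) := by
  obtain rfl : PRbip = prBip wt out := funext hPRbip
  have hout_nonneg : ∀ u, 0 ≤ out u := fun u => hout u ▸ sum_nonneg fun v _ => hnn u v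
  set S := univ.filter fun u => 0 < out u
  set n : ℝ := (Fintype.card V : ℝ)
  set b := 1 / (lam * #S + n)
  have hb : 0 < b := by positivity
  have hnorm : b * (lam * #S + n) = 1 := one_div_mul_cancel (by positivity)
  have hsum : ∑ v, (lam * b * prBip wt out v + b) = 1 := by
    rw [sum_add_distrib, ← mul_sum, sum_prBip hout, sum_const, card_univ, nsmul_eq_mul]
    linear_combination hnorm
  refine ⟨lam * b, b, by positivity,
    fun v => add_pos_of_nonneg_of_pos (mul_nonneg (by positivity) (prBip_nonneg hnn v)) hb,
    hsum, fun v => ?_⟩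
  have hsink : ∀ u v, wt u v ≠ 0 → out v = 0 := fun _ _ =>
    out_eq_zero_of_wt_ne_zero hout hbip hdisj
  have hsources : ∀ u ∈ S, lam * b * prBip wt out u + b = b := fun u hu => by
    rw [prBip_eq_zero_of_pos hsink (mem_filter.1 hu).2, mul_zero, zero_add]
  have hflow : ∑ u ∈ S, wt u v / out u * (lam * b * prBip wt out u + b) = prBip wt out v * b := by
    rw [sum_congr rfl fun u hu => by rw [hsources u hu], ← sum_mul]; rfl
  rw [smoothed_pagerank_rhs_eq wt hout_nonneg, hsum, hflow, sum_congr rfl hsources, sum_const,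
    nsmul_eq_mul]
  field_simp
  linear_combination hnorm

/-- On a one-way bipartite graph, some affine transform (with positive leading
coefficient) of `PR_bip` is a positive, sum-normalized solution of the smoothed
PageRank equation. -/
theorem prBip_affine_solves_pagerank
    {V : Type*} [Fintype V] [Nonempty V]
    (wt : V → V → ℝ) (L R : Finset V) (lam : ℝ)
    (hlam : 0 < lam) (hlam' : lam < 1)
    (hLne : L.Nonempty) (hRne : R.Nonempty)
    (hcover : ∀ v : V, v ∈ L ∨ v ∈ R)
    (hdisj : ∀ v : V, ¬(v ∈ L ∧ v ∈ R))
    (hnn : ∀ u v : V, 0 ≤ wt u v)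
    (hbip : ∀ u v : V, wt u v ≠ 0 → u ∈ L ∧ v ∈ R)
    (hposout : ∀ u ∈ L, 0 < ∑ v : V, wt u v)
    (out : V → ℝ) (hout : ∀ u : V, out u = ∑ v : V, wt u v)
    (PRbip : V → ℝ)
    (hPRbip : ∀ v : V,
      PRbip v = ∑ u ∈ univ.filter (fun u => 0 < out u), wt u v / out u) :
    ∃ a b : ℝ, 0 < a ∧
      (∀ v : V, 0 < a * PRbip v + b) ∧
      (∑ v : V, (a * PRbip v + b)) = 1 ∧
      (∀ v : V, a * PRbip v + b =
        (∑ u ∈ univ.filter (fun u => 0 < out u),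
          ((1 - lam) / (Fintype.card V : ℝ) + lam * wt u v / out u)
            * (a * PRbip u + b)) +
        ∑ u ∈ univ.filter (fun u => out u = 0),
          (1 / (Fintype.card V : ℝ)) * (a * PRbip u + b)) :=
  prBip_affine_solves_pagerank_general wt L R lam hlam hdisj hnn hbip out hout PRbip hPRbip
end

section
/- With notation as in the previous setting (one-way bipartite graph, parts L and R, stationary distribution π of the smoothed PageRank kernel), for every v ∈ R: π(v) = c₁ + c₂·PR_bip(v), where PR_bip(v) = ∑_{u∈L} wt(u,v)/out(u), c₂ = λ·m > 0 with m the common value π(u) for u ∈ L, and c₁ a constant independent of v. -/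
open Finset

/-- In the one-way bipartite setting, on the right part `R` the stationary
distribution of the smoothed PageRank kernel is an affine function of `PR_bip`
with positive leading coefficient `λ·m`, where `m` is the common value of the
stationary distribution on `L`. -/
theorem stationary_affine_in_prBip_on_right
    {V : Type*} [Fintype V] [Nonempty V]
    (wt : V → V → ℝ) (L R : Finset V) (lam : ℝ)
    (hlam : 0 < lam) (hlam' : lam < 1)
    (hLne : L.Nonempty) (hRne : R.Nonempty)
    (hcover : ∀ v : V, v ∈ L ∨ v ∈ R)
    (hdisj : ∀ v : V, ¬(v ∈ L ∧ v ∈ R))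
    (hnn : ∀ u v : V, 0 ≤ wt u v)
    (hbip : ∀ u v : V, wt u v ≠ 0 → u ∈ L ∧ v ∈ R)
    (out : V → ℝ) (hout : ∀ u : V, out u = ∑ v : V, wt u v)
    (hposout : ∀ u ∈ L, 0 < out u)
    (hzeroout : ∀ v ∈ R, out v = 0)
    (P : V → V → ℝ)
    (hP : ∀ u v : V, P u v =
      if 0 < out u then (1 - lam) / (Fintype.card V : ℝ) + lam * wt u v / out u
      else 1 / (Fintype.card V : ℝ))
    (pr : V → ℝ)
    (hprnn : ∀ v : V, 0 ≤ pr v) (hprsum : ∑ v : V, pr v = 1)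
    (hstat : ∀ v : V, pr v = ∑ u : V, pr u * P u v)
    (m : ℝ) (hm : ∀ u ∈ L, pr u = m)
    (PRbip : V → ℝ)
    (hPRbip : ∀ v : V, PRbip v = ∑ u ∈ L, wt u v / out u) :
    0 < lam * m ∧
    ∃ c₁ : ℝ, ∀ v ∈ R, pr v = c₁ + lam * m * PRbip v := by
  classical
  have hn : (0:ℝ) < (Fintype.card V : ℝ) := by
    exact_mod_cast Fintype.card_pos
  set n : ℝ := (Fintype.card V : ℝ) with hndef
  -- lower bound on P
  have hPlb : ∀ u v : V, (1 - lam) / n ≤ P u v := by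
    intro u v
    rw [hP u v]
    split_ifs with h
    · have h0 : 0 ≤ lam * wt u v / out u :=
        div_nonneg (mul_nonneg hlam.le (hnn u v)) h.le
      linarith
    · rw [div_le_div_iff₀ hn hn]
      nlinarith
  -- m is positive
  have hmpos : 0 < m := by
    obtain ⟨u, hu⟩ := hLne
    have h1 : m = ∑ w : V, pr w * P w u := by rw [← hm u hu, hstat u]
    have h2 : ∑ w : V, pr w * ((1 - lam) / n) ≤ ∑ w : V, pr w * P w u := by
      apply Finset.sum_le_sum
      intro w _
      exact mul_le_mul_of_nonneg_left (hPlb w u) (hprnn w)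
    have h3 : ∑ w : V, pr w * ((1 - lam) / n) = (1 - lam) / n := by
      rw [← Finset.sum_mul, hprsum, one_mul]
    have h4 : 0 < (1 - lam) / n := div_pos (by linarith) hn
    linarith [h2.trans_eq h1.symm, h3]
  refine ⟨mul_pos hlam hmpos, ?_⟩
  have hU : L ∪ R = Finset.univ := by
    ext v; simp [hcover v]
  have hD : Disjoint L R := by
    rw [Finset.disjoint_left]
    intro v hv hv'
    exact hdisj v ⟨hv, hv'⟩
  refine ⟨(L.card : ℝ) * (m * ((1 - lam) / n)) + (∑ u ∈ R, pr u) * (1 / n), ?_⟩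
  intro v hv
  have hsplit : pr v = (∑ u ∈ L, pr u * P u v) + (∑ u ∈ R, pr u * P u v) := by
    rw [hstat v, ← Finset.sum_union hD, hU]
  have hLsum : ∑ u ∈ L, pr u * P u v
      = (L.card : ℝ) * (m * ((1 - lam) / n)) + lam * m * PRbip v := by
    have : ∀ u ∈ L, pr u * P u v
        = m * ((1 - lam) / n) + lam * m * (wt u v / out u) := by
      intro u hu
      rw [hm u hu, hP u v, if_pos (hposout u hu)]
      field_simp
    rw [Finset.sum_congr rfl this, Finset.sum_add_distrib, Finset.sum_const,
      nsmul_eq_mul, ← Finset.mul_sum, hPRbip v]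
  have hRsum : ∑ u ∈ R, pr u * P u v = (∑ u ∈ R, pr u) * (1 / n) := by
    rw [Finset.sum_mul]
    apply Finset.sum_congr rfl
    intro u hu
    have : ¬ 0 < out u := by rw [hzeroout u hu]; exact lt_irrefl 0
    rw [hP u v, if_neg this]
  rw [hsplit, hLsum, hRsum]; ring
end

section
/- For a symmetric nonnegative matrix M = BᵀB (B nonnegative with every row nonzero), any eigenvector a of M with eigenvalue equal to the spectral radius and with all entries nonnegative satisfies: if the bipartite graph associated to B is connected (viewing positive entries of B as undirected edges between L and R), then all entries of a are strictly positive. -/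
open Finset Matrix

/-- Perron–Frobenius-type positivity: for a nonnegative matrix `B` with every
row nonzero whose associated bipartite graph is connected, any nonnegative
eigenvector of `BᵀB` for its largest eigenvalue is entrywise strictly
positive. -/
theorem top_nonneg_eigenvector_positive_of_connected
    {L R : Type*} [Fintype L] [Fintype R] [Nonempty L] [Nonempty R]
    [DecidableEq L] [DecidableEq R]
    (B : Matrix L R ℝ)
    (hnn : ∀ u v, 0 ≤ B u v)
    (hrow : ∀ u : L, ∃ v : R, 0 < B u v)
    (hconn : ∀ x y : L ⊕ R, Relation.ReflTransGen
      (fun x y : L ⊕ R =>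
        (∃ u v, x = Sum.inl u ∧ y = Sum.inr v ∧ 0 < B u v) ∨
        (∃ u v, x = Sum.inr v ∧ y = Sum.inl u ∧ 0 < B u v)) x y)
    (μ : ℝ)
    (heigval : ∃ x : R → ℝ, x ≠ 0 ∧ (Bᵀ * B).mulVec x = μ • x)
    (htop : ∀ μ' : ℝ, (∃ x : R → ℝ, x ≠ 0 ∧ (Bᵀ * B).mulVec x = μ' • x) → μ' ≤ μ)
    (a : R → ℝ) (hann : ∀ v : R, 0 ≤ a v) (hane : a ≠ 0)
    (heig : (Bᵀ * B).mulVec a = μ • a) :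
    ∀ v : R, 0 < a v := by

  classical
  have hM : ∀ v v' : R, (Bᵀ * B) v v' = ∑ u, B u v * B u v' := by
    intro v v'
    simp [Matrix.mul_apply, Matrix.transpose_apply]
  have hMnn : ∀ v v' : R, 0 ≤ (Bᵀ * B) v v' := by
    intro v v'
    rw [hM]
    exact Finset.sum_nonneg fun u _ => mul_nonneg (hnn u v) (hnn u v')
  have key : ∀ v v' : R, 0 < a v' → (∃ u, 0 < B u v ∧ 0 < B u v') → 0 < a v := by
    rintro v v' hv' ⟨u, h1, h2⟩
    by_contra h
    have hav : a v = 0 := le_antisymm (not_lt.mp h) (hann v)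
    have h0 : (Bᵀ * B).mulVec a v = 0 := by
      rw [heig]; simp [hav]
    rw [Matrix.mulVec, dotProduct] at h0
    have hterm : ∀ w ∈ Finset.univ, 0 ≤ (Bᵀ * B) v w * a w :=
      fun w _ => mul_nonneg (hMnn v w) (hann w)
    have hz := (Finset.sum_eq_zero_iff_of_nonneg hterm).mp h0 v' (Finset.mem_univ v')
    have hpos : 0 < (Bᵀ * B) v v' * a v' := by
      apply mul_pos _ hv'
      rw [hM]
      have : 0 < B u v * B u v' := mul_pos h1 h2
      exact Finset.sum_pos' (fun w _ => mul_nonneg (hnn w v) (hnn w v'))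
        ⟨u, Finset.mem_univ u, this⟩
    exact absurd hz (ne_of_gt hpos)
  -- pick v₀ with a v₀ > 0
  obtain ⟨v₀, hv₀⟩ : ∃ v₀, 0 < a v₀ := by
    by_contra hc
    push_neg at hc
    exact hane (funext fun v => le_antisymm (hc v) (hann v))
  intro v
  have hpath := hconn (Sum.inr v₀) (Sum.inr v)
  set P : L ⊕ R → Prop := fun x =>
    match x with
    | Sum.inl u => ∃ w, 0 < B u w ∧ 0 < a w
    | Sum.inr w => 0 < a w with hP
  have hstart : P (Sum.inr v₀) := hv₀
  have hall : ∀ x, Relation.ReflTransGen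
      (fun x y : L ⊕ R =>
        (∃ u v, x = Sum.inl u ∧ y = Sum.inr v ∧ 0 < B u v) ∨
        (∃ u v, x = Sum.inr v ∧ y = Sum.inl u ∧ 0 < B u v)) (Sum.inr v₀) x → P x := by
    intro x hx
    clear hP
    induction hx with
    | refl => exact hstart
    | tail h' step ih =>
      rcases step with ⟨u, w, hb, hc, hB⟩ | ⟨u, w, hb, hc, hB⟩
      · subst hb; subst hc
        obtain ⟨w', hBw', haw'⟩ := ih
        exact key w w' haw' ⟨u, hB, hBw'⟩
      · subst hb; subst hc
        exact ⟨w, hB, ih⟩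
  exact hall _ hpath
end
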